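/- Fix u, v ∈ ℂ with u − v ∉ {0, c, −c, cκ, −cκ}, and suppose T(u), T(v) ∈ M_N(A) satisfy the RTT relation at (u,v). Then the traces commute: [ Σ_{i=−n}^{n} T_{i,i}(u), Σ_{j=−n}^{n} T_{j,j}(v) ] = 0 in A. -/

import Mathlib

/-!
The R-matrix is unitary: `R(u,v) R(v,u) = (1 - c/(u-v)) (1 + c/(u-v)) • 1`, which follows from
`P² = 1`, `PQ = QP = Q`, `Q² = (2n+1) Q` and `2n + 1 = 2κ + 2`. Under the hypotheses on `u - v`
this scalar and all denominators are nonzero, so `R(u,v)` is invertible and the RTT relation says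
that `T₁(u) T₂(v)` and `T₂(v) T₁(u)` are conjugate by a matrix with scalar entries. Scalars are
central in `A`, so such a conjugation preserves the trace although `A` is noncommutative, and the
two traces are `tr T(u) · tr T(v)` and `tr T(v) · tr T(u)`.
-/

open scoped Kronecker

noncomputable section

/-- Index set `{-n, …, n}` for matrices of size `N = 2n+1`. -/
abbrev Idx (n : ℕ) : Type := {i : ℤ // i ∈ Finset.Icc (-(n : ℤ)) (n : ℤ)}

/-- Negation `i ↦ -i` on the index set. -/
def Idx.neg {n : ℕ} (i : Idx n) : Idx n :=
  ⟨-i.1, by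
    have h := Finset.mem_Icc.mp i.2
    exact Finset.mem_Icc.mpr ⟨by omega, by omega⟩⟩

/-- Matrix unit `e_{i,j}`. -/
def matE {n : ℕ} (i j : Idx n) : Matrix (Idx n) (Idx n) ℂ :=
  Matrix.single i j 1

/-- `P = Σ_{i,j} e_{i,j} ⊗ e_{j,i}`. -/
def Pmat (n : ℕ) : Matrix (Idx n × Idx n) (Idx n × Idx n) ℂ :=
  ∑ i : Idx n, ∑ j : Idx n, matE i j ⊗ₖ matE j i

/-- `Q = Σ_{i,j} e_{i,j} ⊗ e_{-i,-j}`. -/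
def Qmat (n : ℕ) : Matrix (Idx n × Idx n) (Idx n × Idx n) ℂ :=
  ∑ i : Idx n, ∑ j : Idx n, matE i j ⊗ₖ matE i.neg j.neg

/-- `κ = n - 1/2`. -/
def kappa (n : ℕ) : ℂ := (n : ℂ) - 1 / 2

/-- The `o_{2n+1}`-invariant `R`-matrix
`R(u,v) = I⊗I + (c/(u−v)) P − (c/(u−v+cκ)) Q`. -/
def Rmat (n : ℕ) (c u v : ℂ) : Matrix (Idx n × Idx n) (Idx n × Idx n) ℂ :=
  1 + (c / (u - v)) • Pmat n - (c / (u - v + c * kappa n)) • Qmat n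


/-- The RTT relation at `(u,v)` for a pair of matrices with entries in a
ℂ-algebra `A`: `R(u,v) T₁(u) T₂(v) = T₂(v) T₁(u) R(u,v)`. -/
def RTTrel (n : ℕ) (c u v : ℂ) {A : Type*} [Ring A] [Algebra ℂ A]
    (Tu Tv : Matrix (Idx n) (Idx n) A) : Prop :=
  (Rmat n c u v).map (algebraMap ℂ A) * (Tu ⊗ₖ (1 : Matrix (Idx n) (Idx n) A)) *
      ((1 : Matrix (Idx n) (Idx n) A) ⊗ₖ Tv) =
    ((1 : Matrix (Idx n) (Idx n) A) ⊗ₖ Tv) * (Tu ⊗ₖ (1 : Matrix (Idx n) (Idx n) A)) *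
      (Rmat n c u v).map (algebraMap ℂ A)

open Matrix

section
variable {l m n p α : Type*} [Semiring α]

theorem kronecker_one_mul_one_kronecker [Fintype m] [Fintype n] [DecidableEq m] [DecidableEq n]
    (X : Matrix l m α) (Y : Matrix n p α) :
    (X ⊗ₖ (1 : Matrix n n α)) * ((1 : Matrix m m α) ⊗ₖ Y) = X ⊗ₖ Y := by
  ext ⟨i, j⟩ ⟨k, q⟩
  simp [mul_apply, one_apply, Fintype.sum_prod_type]

theorem one_kronecker_mul_kronecker_one [Fintype l] [Fintype p] [DecidableEq l] [DecidableEq p]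
    (X : Matrix l m α) (Y : Matrix n p α) :
    ((1 : Matrix l l α) ⊗ₖ Y) * (X ⊗ₖ (1 : Matrix p p α)) =
      (Y ⊗ₖ X).submatrix Prod.swap Prod.swap := by
  ext ⟨i, j⟩ ⟨k, q⟩
  simp [mul_apply, one_apply, Fintype.sum_prod_type]

theorem trace_one_kronecker_mul_kronecker_one [Fintype m] [Fintype n] [DecidableEq m]
    [DecidableEq n] (X : Matrix m m α) (Y : Matrix n n α) :
    trace (((1 : Matrix m m α) ⊗ₖ Y) * (X ⊗ₖ (1 : Matrix n n α))) = trace Y * trace X := by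
  rw [one_kronecker_mul_kronecker_one, ← trace_kronecker]
  exact Fintype.sum_equiv (Equiv.prodComm m n) _ _ fun _ => rfl
end

section
variable {ι R A : Type*} [Fintype ι] [CommSemiring R] [Semiring A] [Algebra R A]

theorem trace_map_algebraMap_mul_comm (M : Matrix ι ι R) (X : Matrix ι ι A) :
    trace (M.map (algebraMap R A) * X) = trace (X * M.map (algebraMap R A)) := by
  simp only [trace, diag, mul_apply, map_apply, Algebra.commutes]
  exact Finset.sum_comm

theorem trace_eq_of_map_algebraMap_mul_eq [DecidableEq ι] {M : Matrix ι ι R} (hM : IsUnit M)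
    {X Y : Matrix ι ι A} (h : M.map (algebraMap R A) * X = Y * M.map (algebraMap R A)) :
    trace X = trace Y := by
  obtain ⟨U, rfl⟩ := hM
  let f := (algebraMap R A).mapMatrix (m := ι)
  have hUinv : f ↑U * f ↑U⁻¹ = 1 := by rw [← map_mul, U.mul_inv, map_one]
  have hinvU : f ↑U⁻¹ * f ↑U = 1 := by rw [← map_mul, U.inv_mul, map_one]
  change f U * X = Y * f U at h
  calc trace X = trace (f ↑U⁻¹ * (f U * X)) := by rw [← mul_assoc, hinvU, one_mul]
    _ = trace (Y * f U * f ↑U⁻¹) := by rw [h]; exact trace_map_algebraMap_mul_comm _ _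
    _ = trace Y := by rw [mul_assoc, hUinv, mul_one]
end

theorem one_add_smul_sub_smul_mul_one_add_smul_sub_smul {K B : Type*} [CommRing K] [Ring B]
    [Algebra K B] {P Q : B} {N : K}
    (hPP : P * P = 1) (hPQ : P * Q = Q) (hQP : Q * P = Q) (hQQ : Q * Q = N • Q)
    (α β α' β' : K) :
    (1 + α • P - β • Q) * (1 + α' • P - β' • Q) =
      (1 + α * α') • 1 + (α + α') • P + (N * β * β' - β - β' - α' * β - α * β') • Q := by
  simp only [sub_mul, mul_sub, add_mul, mul_add, one_mul, mul_one, smul_mul_assoc,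
    mul_smul_comm, hPP, hPQ, hQP, hQQ, smul_smul]
  module

theorem Idx.neg_neg {n : ℕ} (i : Idx n) : i.neg.neg = i :=
  Subtype.ext (_root_.neg_neg i.1)

theorem Idx.neg_eq_iff_eq_neg {n : ℕ} {i j : Idx n} : i.neg = j ↔ i = j.neg := by
  constructor <;> rintro rfl <;> rw [Idx.neg_neg]

theorem card_Idx (n : ℕ) : Fintype.card (Idx n) = 2 * n + 1 := by
  rw [Fintype.card_coe, Int.card_Icc]
  omega

theorem Pmat_apply (n : ℕ) (p q : Idx n × Idx n) :
    Pmat n p q = if p.swap = q then 1 else 0 := by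
  simp only [Pmat, matE, single_kronecker_single, mul_one]
  rw [← Fintype.sum_prod_type' (fun i j => single (i, j) (j, i) (1 : ℂ))]
  simp only [Matrix.sum_apply, single_apply, ite_and, Prod.mk.eta, Finset.sum_ite_eq',
    Finset.mem_univ, if_true]
  rfl

theorem Pmat_mul_apply {ι : Type*} (n : ℕ) (M : Matrix (Idx n × Idx n) ι ℂ) (p : Idx n × Idx n)
    (r : ι) : (Pmat n * M) p r = M p.swap r := by
  simp only [mul_apply, Pmat_apply, ite_mul, one_mul, zero_mul, Fintype.sum_ite_eq]

theorem mul_Pmat_apply {ι : Type*} (n : ℕ) (M : Matrix ι (Idx n × Idx n) ℂ) (p : ι)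
    (r : Idx n × Idx n) : (M * Pmat n) p r = M p r.swap := by
  simp only [mul_apply, Pmat_apply, mul_ite, mul_one, mul_zero, Prod.swap_eq_iff_eq_swap,
    Fintype.sum_ite_eq']

theorem Pmat_mul_Pmat (n : ℕ) : Pmat n * Pmat n = 1 := by
  ext p r
  rw [Pmat_mul_apply, Pmat_apply, Prod.swap_swap, one_apply]

-- `Q = ω ωᵀ` for the vector `ω = Σᵢ eᵢ ⊗ e₋ᵢ` of the invariant symmetric form.
def formVec (n : ℕ) (p : Idx n × Idx n) : ℂ := if p.1.neg = p.2 then 1 else 0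

theorem formVec_swap (n : ℕ) (p : Idx n × Idx n) : formVec n p.swap = formVec n p := by
  simp only [formVec, Prod.fst_swap, Prod.snd_swap, Idx.neg_eq_iff_eq_neg, eq_comm (a := p.2)]

theorem formVec_dotProduct_formVec (n : ℕ) : formVec n ⬝ᵥ formVec n = 2 * n + 1 := by
  simp only [dotProduct, formVec, mul_ite, mul_one, mul_zero, Fintype.sum_prod_type,
    Fintype.sum_ite_eq, Finset.sum_const, Finset.card_univ, card_Idx]
  push_cast; ring

theorem Qmat_eq_vecMulVec (n : ℕ) : Qmat n = vecMulVec (formVec n) (formVec n) := by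
  ext p q
  simp only [Qmat, matE, single_kronecker_single, mul_one, Matrix.sum_apply, single_apply,
    Prod.ext_iff, ite_and, Finset.sum_ite_irrel, Finset.sum_const_zero, Fintype.sum_ite_eq',
    vecMulVec_apply, formVec, ite_mul, one_mul, zero_mul]

theorem Pmat_mul_Qmat (n : ℕ) : Pmat n * Qmat n = Qmat n := by
  ext p r
  rw [Pmat_mul_apply, Qmat_eq_vecMulVec, vecMulVec_apply, vecMulVec_apply, formVec_swap]

theorem Qmat_mul_Pmat (n : ℕ) : Qmat n * Pmat n = Qmat n := by
  ext p r
  rw [mul_Pmat_apply, Qmat_eq_vecMulVec, vecMulVec_apply, vecMulVec_apply, formVec_swap]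

theorem Qmat_mul_Qmat (n : ℕ) : Qmat n * Qmat n = (2 * n + 1 : ℂ) • Qmat n := by
  rw [Qmat_eq_vecMulVec, vecMulVec_mul_vecMulVec, formVec_dotProduct_formVec, vecMulVec_smul]

theorem Rmat_mul_Rmat_swap {n : ℕ} {c u v : ℂ} (hx : u - v ≠ 0)
    (hκ₁ : u - v + c * kappa n ≠ 0) (hκ₂ : v - u + c * kappa n ≠ 0) :
    Rmat n c u v * Rmat n c v u = ((1 - c / (u - v)) * (1 + c / (u - v))) • 1 := by
  rw [Rmat, Rmat, one_add_smul_sub_smul_mul_one_add_smul_sub_smul (Pmat_mul_Pmat n)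
    (Pmat_mul_Qmat n) (Qmat_mul_Pmat n) (Qmat_mul_Qmat n)]
  have hN : (2 * n + 1 : ℂ) * c = 2 * (c * kappa n) + 2 * c := by rw [kappa]; ring
  rw [← neg_sub u v] at hκ₂ ⊢
  generalize u - v = x at *
  generalize c * kappa n = k at *
  have hP : c / x + c / -x = 0 := by rw [div_neg, add_neg_cancel]
  -- the vanishing of this coefficient is where `κ = n - 1/2` is forced
  have hQ : (2 * n + 1 : ℂ) * (c / (x + k)) * (c / (-x + k)) - c / (x + k) - c / (-x + k)
      - c / -x * (c / (x + k)) - c / x * (c / (-x + k)) = 0 := by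
    field_simp
    linear_combination x * c * hN
  rw [hP, hQ, zero_smul, zero_smul, add_zero, add_zero, div_neg]
  congr 1
  ring

theorem isUnit_Rmat {n : ℕ} {c u v : ℂ} (hx : u - v ≠ 0) (hc : u - v ≠ c) (hc' : u - v ≠ -c)
    (hκ : u - v ≠ c * kappa n) (hκ' : u - v ≠ -(c * kappa n)) : IsUnit (Rmat n c u v) := by
  have hκ₁ : u - v + c * kappa n ≠ 0 := fun h => hκ' (eq_neg_of_add_eq_zero_left h)
  have hκ₂ : v - u + c * kappa n ≠ 0 := fun h => hκ (by linear_combination -h)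
  have hμ : (1 - c / (u - v)) * (1 + c / (u - v)) ≠ 0 := by
    refine mul_ne_zero (fun h => hc ?_) (fun h => hc' ?_) <;> field_simp at h <;>
      linear_combination h
  refine IsUnit.of_mul_eq_one (((1 - c / (u - v)) * (1 + c / (u - v)))⁻¹ • Rmat n c v u) ?_
  rw [Matrix.mul_smul, Rmat_mul_Rmat_swap hx hκ₁ hκ₂, smul_smul, inv_mul_cancel₀ hμ, one_smul]

theorem statement8_general (n : ℕ) (c : ℂ)
    {A : Type*} [Ring A] [Algebra ℂ A]
    (u v : ℂ) (h0 : u - v ≠ 0) (h1 : u - v ≠ c) (h2 : u - v ≠ -c)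
    (h3 : u - v ≠ c * kappa n) (h4 : u - v ≠ -(c * kappa n))
    (Tu Tv : Matrix (Idx n) (Idx n) A)
    (hT : RTTrel n c u v Tu Tv) :
    (∑ i : Idx n, Tu i i) * (∑ j : Idx n, Tv j j) =
      (∑ j : Idx n, Tv j j) * (∑ i : Idx n, Tu i i) := by
  have hconj := trace_eq_of_map_algebraMap_mul_eq (isUnit_Rmat h0 h1 h2 h3 h4)
    (X := Tu ⊗ₖ 1 * 1 ⊗ₖ Tv) (Y := 1 ⊗ₖ Tv * Tu ⊗ₖ 1) (by rw [← mul_assoc]; exact hT)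
  rwa [kronecker_one_mul_one_kronecker, trace_kronecker,
    trace_one_kronecker_mul_kronecker_one] at hconj

/-- if `T(u), T(v)` satisfy the RTT relation at `(u,v)` with
`u − v ∉ {0, c, −c, cκ, −cκ}`, then their traces commute:
`[Σ_i T_{i,i}(u), Σ_j T_{j,j}(v)] = 0`. -/
theorem statement8 (n : ℕ) (hn : 1 ≤ n) (c : ℂ) (hc : c ≠ 0)
    {A : Type*} [Ring A] [Algebra ℂ A]
    (u v : ℂ) (h0 : u - v ≠ 0) (h1 : u - v ≠ c) (h2 : u - v ≠ -c)
    (h3 : u - v ≠ c * kappa n) (h4 : u - v ≠ -(c * kappa n))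
    (Tu Tv : Matrix (Idx n) (Idx n) A)
    (hT : RTTrel n c u v Tu Tv) :
    (∑ i : Idx n, Tu i i) * (∑ j : Idx n, Tv j j) =
      (∑ j : Idx n, Tv j j) * (∑ i : Idx n, Tu i i) :=
  statement8_general n c u v h0 h1 h2 h3 h4 Tu Tv hT
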